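/- arXiv:1503.05701 — 4 statements merged into one kernel-verified Lean document; each statement's English description precedes it below -/
import Mathlib

section
/- Let m ≥ 2 be an integer and σ ≥ 2 a real number. Then (m^σ/log m) · Σ_{n=m+1}^∞ (log n)/n^σ ≤ 2·(1 + 8m/σ)·(1 + 1/m)^{-σ}. -/
/-!
For `x ≥ exp σ⁻¹` the summand `log x / x ^ σ` is antitone, so the tail starting at `c = m + 1`
is at most its first term plus `∫_c^∞ log x / x ^ σ dx = c ^ (1 - σ) (log c / (σ - 1) + (σ - 1)⁻²)`.
Since `(1 + 1/m) ^ (-σ) = (m / c) ^ σ`, what remains is an elementary inequality, which follows from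
`log c ≤ 2 log m`, `c ≤ 2m`, `σ ≤ 2 (σ - 1)` and `log m ≥ log 2 > 1/2`.
-/

open Filter Set MeasureTheory Real Topology

theorem AntitoneOn.tsum_add_le_integral {f : ℝ → ℝ} {a : ℝ} (anti : AntitoneOn f (Ici a))
    (integrable : IntegrableOn f (Ioi a)) (nonneg : ∀ t ∈ Ioi a, 0 ≤ f t) :
    ∑' n : ℕ, f (n + a) ≤ f a + ∫ x in Ioi a, f x := by
  have shift := measurePreserving_add_right (volume : Measure ℝ) a
  have emb := measurableEmbedding_addRight (G := ℝ) a
  have preimage : (· + a) ⁻¹' Ioi a = Ioi 0 := by simp [preimage_add_const_Ioi]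
  have bound := AntitoneOn.tsum_le_integral (f := fun x ↦ f (x + a))
    (fun x hx y hy hxy ↦ anti (by simpa using hx) (by simpa using hy) (by simpa using hxy))
    (by rw [← preimage]; exact (shift.integrableOn_comp_preimage emb).2 integrable)
    (fun t ht ↦ nonneg _ (by simpa using ht))
  rwa [← preimage, shift.setIntegral_preimage_emb emb, zero_add] at bound

theorem hasDerivAt_neg_rpow_one_sub_mul_log {σ x : ℝ} (hσ : σ ≠ 1) (hx : 0 < x) :
    HasDerivAt (fun y ↦ -(y ^ (1 - σ) * (log y / (σ - 1) + ((σ - 1) ^ 2)⁻¹)))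
      (log x / x ^ σ) x := by
  have hpow : HasDerivAt (fun y ↦ y ^ (1 - σ)) ((1 - σ) * x ^ (-σ)) x := by
    simpa using hasDerivAt_rpow_const (p := 1 - σ) (Or.inl hx.ne')
  refine (hpow.mul (((hasDerivAt_log hx.ne').div_const (σ - 1)).add_const _)).neg.congr_deriv ?_
  have hσ' : σ - 1 ≠ 0 := sub_ne_zero.2 hσ
  rw [show (1 : ℝ) - σ = -σ + 1 by ring, rpow_add_one hx.ne', rpow_neg hx.le]
  field_simp
  ring

theorem tendsto_neg_rpow_one_sub_mul_log_atTop {σ : ℝ} (hσ : 1 < σ) :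
    Tendsto (fun y ↦ -(y ^ (1 - σ) * (log y / (σ - 1) + ((σ - 1) ^ 2)⁻¹))) atTop (𝓝 0) := by
  have hσ' : 0 < σ - 1 := sub_pos.2 hσ
  have hlog := (isLittleO_log_rpow_atTop hσ').tendsto_div_nhds_zero
  have hpow := tendsto_rpow_neg_atTop hσ'
  have := ((hlog.div_const (σ - 1)).add (hpow.mul_const ((σ - 1) ^ 2)⁻¹)).neg
  rw [zero_div, zero_mul, add_zero, neg_zero] at this
  refine this.congr' ?_
  filter_upwards [eventually_gt_atTop 0] with y hy
  rw [show 1 - σ = -(σ - 1) by ring, rpow_neg hy.le]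
  ring

section LogDivRpow

variable {σ c x : ℝ}

theorem log_div_rpow_nonneg (hx : 1 ≤ x) : 0 ≤ log x / x ^ σ :=
  div_nonneg (log_nonneg hx) (rpow_nonneg (by linarith) _)

theorem integrableOn_Ioi_log_div_rpow (hσ : 1 < σ) (hc : 1 ≤ c) :
    IntegrableOn (fun x ↦ log x / x ^ σ) (Ioi c) :=
  integrableOn_Ioi_deriv_of_nonneg'
    (fun x hx ↦ hasDerivAt_neg_rpow_one_sub_mul_log hσ.ne' (by linarith [mem_Ici.1 hx]))
    (fun x hx ↦ log_div_rpow_nonneg (hc.trans (le_of_lt hx)))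
    (tendsto_neg_rpow_one_sub_mul_log_atTop hσ)

theorem integral_Ioi_log_div_rpow (hσ : 1 < σ) (hc : 1 ≤ c) :
    ∫ x in Ioi c, log x / x ^ σ = c ^ (1 - σ) * (log c / (σ - 1) + ((σ - 1) ^ 2)⁻¹) := by
  have := integral_Ioi_of_hasDerivAt_of_nonneg'
    (fun x hx ↦ hasDerivAt_neg_rpow_one_sub_mul_log hσ.ne' (by linarith [mem_Ici.1 hx]))
    (fun x hx ↦ log_div_rpow_nonneg (hc.trans (le_of_lt hx)))
    (tendsto_neg_rpow_one_sub_mul_log_atTop hσ)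
  rw [this]
  ring

theorem tsum_log_div_rpow_le (hσ : 1 < σ) (hc : exp σ⁻¹ ≤ c) :
    ∑' n : ℕ, log (n + c) / (n + c) ^ σ ≤
      log c / c ^ σ + c ^ (1 - σ) * (log c / (σ - 1) + ((σ - 1) ^ 2)⁻¹) := by
  have hc1 : 1 ≤ c := (one_le_exp (inv_nonneg.2 (by linarith))).trans hc
  have hanti := (log_div_self_rpow_antitoneOn (by linarith)).mono (Ici_subset_Ici.2 hc)
  rw [← integral_Ioi_log_div_rpow hσ hc1]
  exact hanti.tsum_add_le_integral (integrableOn_Ioi_log_div_rpow hσ hc1)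
    (fun t ht ↦ log_div_rpow_nonneg (hc1.trans ht.le))

end LogDivRpow

theorem log_add_one_add_div_le {m σ : ℝ} (hm : 2 ≤ m) (hσ : 2 ≤ σ) :
    log (m + 1) + (m + 1) * log (m + 1) / (σ - 1) + (m + 1) / (σ - 1) ^ 2 ≤
      2 * (1 + 8 * m / σ) * log m := by
  have hlog_half : 1 / 2 ≤ log m := by
    linarith [log_two_gt_d9, log_le_log two_pos hm]
  have hlog_succ : log (m + 1) ≤ 2 * log m := by
    calc log (m + 1) ≤ log (m ^ 2) := log_le_log (by linarith) (by nlinarith)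
      _ = 2 * log m := by simp [log_pow]
  have hmul : (m + 1) * log (m + 1) ≤ 2 * m * (2 * log m) :=
    mul_le_mul (by linarith) hlog_succ (log_nonneg (by linarith)) (by linarith)
  have hfirst : (m + 1) * log (m + 1) / (σ - 1) ≤ 8 * m * log m / σ := by
    rw [div_le_div_iff₀ (by linarith) (by linarith)]
    nlinarith [mul_le_mul_of_nonneg_left hσ (by positivity : 0 ≤ m * log m)]
  have hsecond : (m + 1) / (σ - 1) ^ 2 ≤ 8 * m * log m / σ := by
    rw [div_le_div_iff₀ (by nlinarith) (by linarith)]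
    nlinarith [mul_nonneg (sub_nonneg.2 hσ) (by linarith : (0 : ℝ) ≤ 2 * σ - 1),
      mul_le_mul_of_nonneg_left hlog_half (by positivity : 0 ≤ m * (σ - 1) ^ 2)]
  have hrhs : 2 * (1 + 8 * m / σ) * log m =
      2 * log m + 8 * m * log m / σ + 8 * m * log m / σ := by
    ring
  linarith

theorem stmt0 (m : ℕ) (hm : 2 ≤ m) (σ : ℝ) (hσ : 2 ≤ σ) :
    (m : ℝ) ^ σ / Real.log m * ∑' n : ℕ, Real.log (n + m + 1) / ((n : ℝ) + m + 1) ^ σ ≤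
      2 * (1 + 8 * m / σ) * (1 + 1 / m) ^ (-σ) := by
  have hm' : (2 : ℝ) ≤ m := by exact_mod_cast hm
  set c : ℝ := m + 1 with hc
  have hσ1 : 1 < σ := by linarith
  have hexp : exp σ⁻¹ ≤ c := by
    calc exp σ⁻¹ ≤ exp 1 := exp_le_exp.2 (inv_le_one_of_one_le₀ hσ1.le)
      _ ≤ c := by linarith [exp_one_lt_d9]
  have hrhs : (1 + 1 / (m : ℝ)) ^ (-σ) = m ^ σ / c ^ σ := by
    rw [show 1 + 1 / (m : ℝ) = c / m by rw [hc]; field_simp, rpow_neg (by positivity),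
      div_rpow (by positivity) (by positivity), inv_div]
  have hc_pow : c ^ (1 - σ) = c / c ^ σ := by
    rw [sub_eq_add_neg, rpow_add (by positivity), rpow_one, rpow_neg (by positivity),
      div_eq_mul_inv]
  have hlog : 0 < log (m : ℝ) := log_pos (by linarith)
  have hσ_sub : σ - 1 ≠ 0 := by linarith
  rw [hrhs]
  calc (m : ℝ) ^ σ / log m * ∑' n : ℕ, log (n + m + 1) / ((n : ℝ) + m + 1) ^ σ
      ≤ m ^ σ / log m * (log c / c ^ σ + c ^ (1 - σ) * (log c / (σ - 1) + ((σ - 1) ^ 2)⁻¹)) := by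
        gcongr
        simpa only [add_assoc] using tsum_log_div_rpow_le hσ1 hexp
    _ = m ^ σ / c ^ σ / log m * (log c + c * log c / (σ - 1) + c / (σ - 1) ^ 2) := by
        rw [hc_pow]
        field_simp
        ring
    _ ≤ m ^ σ / c ^ σ / log m * (2 * (1 + 8 * m / σ) * log m) := by
        gcongr
        exact log_add_one_add_div_le hm' hσ
    _ = 2 * (1 + 8 * m / σ) * (m ^ σ / c ^ σ) := by
        field_simp
end

section
/- Let q > 1 be an integer, χ a Dirichlet character mod q, m the smallest prime not dividing q, and define G₁(s,χ) := -(m^s/(χ(m)·log m))·L'(s,χ), where L(s,χ) is the Dirichlet L-function. Then for all s = σ+it with σ ≥ 2, |G₁(s,χ) - 1| ≤ 2·(1 + 8m/σ)·(1 + 1/m)^{-σ}. -/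
/-!
Since `L'(s, χ) = -∑ χ(n) log n / n ^ s` and `χ(n) = 0` for `1 < n < m` (such an `n` has a prime
factor below `m`, which must divide `q`), `G₁(s, χ) - 1` is `m ^ s / (χ(m) log m)` times the tail
`∑_{n > m} χ(n) log n / n ^ s`. As `log t / t ^ σ` decreases for `t ≥ exp (1 / σ)`, this tail is at
most its first term plus `∫_{m+1}^∞ log t / t ^ σ dt`, and elementary estimates for `σ ≥ 2`,
`m ≥ 2` finish the proof.
-/

open Real

-- `logRpowTail σ x = ∫ t in Ioi x, log t / t ^ σ` for `σ > 1`, `x > 0`.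
noncomputable def logRpowTail (σ x : ℝ) : ℝ := (log x + (σ - 1)⁻¹) * x ^ (1 - σ) / (σ - 1)

lemma hasDerivAt_logRpowTail {σ x : ℝ} (hσ : σ ≠ 1) (hx : 0 < x) :
    HasDerivAt (logRpowTail σ) (-(log x / x ^ σ)) x := by
  have hσ' : σ - 1 ≠ 0 := sub_ne_zero.mpr hσ
  refine ((((hasDerivAt_log hx.ne').add_const (σ - 1)⁻¹).mul
    (hasDerivAt_rpow_const (p := 1 - σ) (Or.inl hx.ne'))).div_const (σ - 1)).congr_deriv ?_
  rw [sub_sub_cancel_left, rpow_neg hx.le, show 1 - σ = 1 + -σ by ring, rpow_add hx, rpow_one,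
    rpow_neg hx.le]
  field_simp
  ring

lemma logRpowTail_nonneg {σ x : ℝ} (hσ : 1 < σ) (hx : 1 ≤ x) : 0 ≤ logRpowTail σ x := by
  have : 0 < σ - 1 := sub_pos.mpr hσ
  have := log_nonneg hx
  unfold logRpowTail
  positivity

lemma sum_log_div_rpow_le_logRpowTail {σ x : ℝ} (hσ : 1 < σ) (hx : exp σ⁻¹ ≤ x)
    (K : ℕ) :
    ∑ i ∈ Finset.range K, log (x + ↑(i + 1)) / (x + ↑(i + 1)) ^ σ ≤ logRpowTail σ x := by
  have hx1 : 1 ≤ x := le_trans (one_le_exp (by positivity)) hx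
  have hxK : x ≤ x + K := le_add_of_nonneg_right K.cast_nonneg
  have hanti : AntitoneOn (fun y ↦ log y / y ^ σ) (Set.Icc x (x + K)) :=
    (log_div_self_rpow_antitoneOn (by linarith)).mono fun y hy ↦ le_trans hx hy.1
  have hderiv : ∀ y ∈ Set.uIcc x (x + K),
      HasDerivAt (-logRpowTail σ) (log y / y ^ σ) y := by
    intro y hy
    rw [Set.uIcc_of_le hxK] at hy
    simpa using (hasDerivAt_logRpowTail hσ.ne' (by linarith [hy.1])).neg
  calc ∑ i ∈ Finset.range K, log (x + ↑(i + 1)) / (x + ↑(i + 1)) ^ σ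
      ≤ ∫ y in x..x + K, log y / y ^ σ := hanti.sum_le_integral
    _ = logRpowTail σ x - logRpowTail σ (x + K) := by
      rw [intervalIntegral.integral_eq_sub_of_hasDerivAt hderiv
        (by rw [← Set.uIcc_of_le hxK] at hanti; exact hanti.intervalIntegrable)]
      simp only [Pi.neg_apply]
      ring
    _ ≤ logRpowTail σ x := by linarith [logRpowTail_nonneg hσ (hx1.trans hxK)]

lemma summable_log_div_rpow_and_tsum_le {σ x : ℝ} (hσ : 1 < σ) (hx : exp σ⁻¹ ≤ x) :
    Summable (fun k : ℕ ↦ log (x + k) / (x + k) ^ σ) ∧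
      ∑' k : ℕ, log (x + k) / (x + k) ^ σ ≤ log x / x ^ σ + logRpowTail σ x := by
  have hx1 : 1 ≤ x := le_trans (one_le_exp (by positivity)) hx
  have hnonneg (k : ℕ) : 0 ≤ log (x + k) / (x + k) ^ σ := by
    have : 1 ≤ x + k := le_add_of_le_of_nonneg hx1 k.cast_nonneg
    have := log_nonneg this
    positivity
  have hpartial (K : ℕ) :
      ∑ k ∈ Finset.range K, log (x + k) / (x + k) ^ σ ≤ log x / x ^ σ + logRpowTail σ x :=
    calc ∑ k ∈ Finset.range K, log (x + k) / (x + k) ^ σ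
        ≤ ∑ k ∈ Finset.range (K + 1), log (x + k) / (x + k) ^ σ :=
          Finset.sum_le_sum_of_subset_of_nonneg (by simp) fun k _ _ ↦ hnonneg k
      _ ≤ log x / x ^ σ + logRpowTail σ x := by
          rw [Finset.sum_range_succ', add_comm]
          simpa using sum_log_div_rpow_le_logRpowTail hσ hx K
  exact ⟨summable_of_sum_range_le hnonneg hpartial,
    Real.tsum_le_of_sum_range_le hnonneg hpartial⟩

lemma log_add_one_add_mul_le {M σ : ℝ} (hM : 2 ≤ M) (hσ : 2 ≤ σ) :
    log (M + 1) + (M + 1) * (log (M + 1) + (σ - 1)⁻¹) * (σ - 1)⁻¹ ≤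
      2 * (1 + 8 * M / σ) * log M := by
  set u := (σ - 1)⁻¹
  have hu0 : 0 < u := inv_pos.mpr (by linarith)
  have hu1 : u ≤ 1 := inv_le_one_of_one_le₀ (by linarith)
  have huσ : u * σ ≤ 2 := by
    rw [inv_mul_le_iff₀ (by linarith)]; linarith
  have hL : 1 / 2 ≤ log M := by
    have := log_le_log (by norm_num) hM
    linarith [log_two_gt_d9]
  have hL1 : log (M + 1) ≤ 2 * log M := by
    rw [← log_rpow (by linarith)]
    exact log_le_log (by linarith) (by norm_num; nlinarith)
  have hsum : log (M + 1) + u ≤ 4 * log M := by linarith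
  have hL1pos : 0 ≤ log (M + 1) := log_nonneg (by linarith)
  have hmain : (M + 1) * (log (M + 1) + u) * u * σ ≤ 16 * M * log M :=
    calc (M + 1) * (log (M + 1) + u) * u * σ
          = (M + 1) * (log (M + 1) + u) * (u * σ) := by ring
      _ ≤ (3 / 2 * M) * (4 * log M) * 2 := by gcongr; linarith
      _ ≤ 16 * M * log M := by nlinarith
  have hσ0 : 0 < σ := by linarith
  have : (M + 1) * (log (M + 1) + u) * u ≤ 16 * M * log M / σ := by
    rwa [le_div_iff₀ hσ0]
  calc _ ≤ 2 * log M + 16 * M * log M / σ := by linarith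
    _ = _ := by ring

lemma rpow_div_log_mul_tail_le {M σ : ℝ} (hM : 2 ≤ M) (hσ : 2 ≤ σ) :
    M ^ σ / log M * (log (M + 1) / (M + 1) ^ σ + logRpowTail σ (M + 1)) ≤
      2 * (1 + 8 * M / σ) * (1 + 1 / M) ^ (-σ) := by
  have hM0 : 0 < M := by linarith
  have hM1 : 0 < M + 1 := by linarith
  have hL : 0 < log M := log_pos (by linarith)
  have hpow : (1 + 1 / M) ^ (-σ) = M ^ σ / (M + 1) ^ σ := by
    rw [show 1 + 1 / M = (M + 1) / M by field_simp, rpow_neg (by positivity),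
      div_rpow hM1.le hM0.le, inv_div]
  have htail : logRpowTail σ (M + 1) =
      (M + 1) * (log (M + 1) + (σ - 1)⁻¹) * (σ - 1)⁻¹ / (M + 1) ^ σ := by
    rw [logRpowTail, rpow_sub hM1, rpow_one]
    ring
  calc M ^ σ / log M * (log (M + 1) / (M + 1) ^ σ + logRpowTail σ (M + 1))
      = M ^ σ / (M + 1) ^ σ *
          ((log (M + 1) + (M + 1) * (log (M + 1) + (σ - 1)⁻¹) * (σ - 1)⁻¹) / log M) := by
        rw [htail]; ring
    _ ≤ M ^ σ / (M + 1) ^ σ * (2 * (1 + 8 * M / σ)) := by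
        gcongr
        rw [div_le_iff₀ hL]
        exact log_add_one_add_mul_le hM hσ
    _ = 2 * (1 + 8 * M / σ) * (1 + 1 / M) ^ (-σ) := by rw [hpow, mul_comm]

theorem Nat.not_coprime_of_lt_of_forall_prime_not_dvd_le {q m n : ℕ}
    (hm : ∀ p : ℕ, p.Prime → ¬ p ∣ q → m ≤ p) (h1 : 1 < n) (hn : n < m) : ¬ n.Coprime q := by
  intro hcop
  have hp : n.minFac.Prime := Nat.minFac_prime h1.ne'
  have hpq : ¬ n.minFac ∣ q :=
    (Nat.Prime.coprime_iff_not_dvd hp).mp (hcop.coprime_dvd_left (Nat.minFac_dvd n))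
  have := Nat.minFac_le (by omega : 0 < n)
  have := hm _ hp hpq
  omega

open LSeries

namespace DirichletCharacter

variable {q : ℕ} (χ : DirichletCharacter ℂ q)

lemma logMul_eq_zero_of_lt {m n : ℕ} (hm : ∀ p : ℕ, p.Prime → ¬ p ∣ q → m ≤ p) (hn : n < m) :
    logMul (fun n : ℕ ↦ χ n) n = 0 := by
  rcases Nat.lt_or_ge n 2 with h | h
  · interval_cases n <;> simp
  · have hχ : χ n = 0 := χ.map_nonunit fun hu ↦
      Nat.not_coprime_of_lt_of_forall_prime_not_dvd_le hm h hn
        ((ZMod.isUnit_iff_coprime n q).mp hu)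
    simp [hχ]

lemma norm_term_logMul_le (s : ℂ) (n : ℕ) :
    ‖term (logMul fun n : ℕ ↦ χ n) s n‖ ≤ Real.log n / (n : ℝ) ^ s.re := by
  rcases eq_or_ne n 0 with rfl | hn
  · simp
  rw [norm_term_eq, if_neg hn, logMul, norm_mul, ← Complex.natCast_log, Complex.norm_real,
    norm_of_nonneg (Real.log_natCast_nonneg n)]
  gcongr
  exact mul_le_of_le_one_right (Real.log_natCast_nonneg n) (χ.norm_le_one _)

lemma abscissaOfAbsConv_lt_re [NeZero q] {s : ℂ} (hs : 1 < s.re) :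
    abscissaOfAbsConv (fun n : ℕ ↦ χ n) < s.re := by
  rw [absicssaOfAbsConv_eq_one (NeZero.ne q)]
  exact_mod_cast hs

lemma LSeries_logMul_eq_term_add_tsum [NeZero q] {m : ℕ}
    (hm : ∀ p : ℕ, p.Prime → ¬ p ∣ q → m ≤ p) {s : ℂ} (hs : 1 < s.re) :
    LSeries (logMul fun n : ℕ ↦ χ n) s =
      term (logMul fun n : ℕ ↦ χ n) s m +
        ∑' k, term (logMul fun n : ℕ ↦ χ n) s (k + (m + 1)) := by
  have hsum := LSeriesSummable_logMul_of_lt_re (χ.abscissaOfAbsConv_lt_re hs)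
  rw [LSeries, ← hsum.sum_add_tsum_nat_add (m + 1), Finset.sum_range_succ, Finset.sum_eq_zero,
    zero_add]
  intro n hn
  simp [term_def, χ.logMul_eq_zero_of_lt hm (Finset.mem_range.mp hn)]

lemma cpow_div_mul_log_mul_term_logMul {m : ℕ} (hm : 1 < m) (hχ : χ m ≠ 0) (s : ℂ) :
    (m : ℂ) ^ s / (χ m * Real.log m) * term (logMul fun n : ℕ ↦ χ n) s m = 1 := by
  have : (m : ℂ) ^ s ≠ 0 := Complex.cpow_ne_zero_iff.mpr (.inl (mod_cast (by omega : m ≠ 0)))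
  have : (Real.log m : ℂ) ≠ 0 := mod_cast (Real.log_pos (mod_cast hm)).ne'
  rw [term_of_ne_zero (by omega), logMul, ← Complex.natCast_log]
  field_simp

lemma norm_tsum_term_logMul_tail_le {s : ℂ} (hs : 1 < s.re) {m : ℕ}
    (hm : exp s.re⁻¹ ≤ (m : ℝ) + 1) :
    ‖∑' k, term (logMul fun n : ℕ ↦ χ n) s (k + (m + 1))‖ ≤
      Real.log (m + 1) / ((m : ℝ) + 1) ^ s.re + logRpowTail s.re (m + 1) := by
  obtain ⟨hsum, htsum⟩ := summable_log_div_rpow_and_tsum_le hs hm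
  refine (tsum_of_norm_bounded hsum.hasSum fun k ↦ ?_).trans htsum
  have hk : ((k + (m + 1) : ℕ) : ℝ) = (m : ℝ) + 1 + k := by push_cast; ring
  simpa only [hk] using χ.norm_term_logMul_le s (k + (m + 1))

end DirichletCharacter

theorem stmt1_general (q : ℕ) [NeZero q] (χ : DirichletCharacter ℂ q) (m : ℕ)
    (hm_prime : m.Prime) (hm_ndvd : ¬ m ∣ q)
    (hm_min : ∀ p : ℕ, p.Prime → ¬ p ∣ q → m ≤ p)
    (s : ℂ) (hs : 2 ≤ s.re) :
    ‖-((m : ℂ) ^ s / (χ (m : ZMod q) * Real.log m)) *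
        deriv (DirichletCharacter.LFunction χ) s - 1‖ ≤
      2 * (1 + 8 * m / s.re) * (1 + 1 / (m : ℝ)) ^ (-s.re) := by
  set C : ℂ := (m : ℂ) ^ s / (χ (m : ZMod q) * Real.log m)
  set a : ℕ → ℂ := term (logMul fun n : ℕ ↦ χ n) s
  have hm2 : (2 : ℝ) ≤ m := by exact_mod_cast hm_prime.two_le
  have hχm : ‖χ (m : ZMod q)‖ = 1 :=
    χ.unit_norm_eq_one (ZMod.isUnit_prime_of_not_dvd hm_prime hm_ndvd).unit
  have hCa : C * a m = 1 := χ.cpow_div_mul_log_mul_term_logMul hm_prime.one_lt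
    (norm_ne_zero_iff.mp (by rw [hχm]; exact one_ne_zero)) s
  have hnormC : ‖C‖ = (m : ℝ) ^ s.re / Real.log m := by
    rw [norm_div, norm_mul, Complex.norm_natCast_cpow_of_pos hm_prime.pos, hχm, one_mul,
      Complex.norm_real, norm_of_nonneg (Real.log_pos (by linarith)).le]
  have hexp : exp s.re⁻¹ ≤ (m : ℝ) + 1 :=
    (exp_le_exp.mpr (inv_le_one_of_one_le₀ (by linarith))).trans (by linarith [exp_one_lt_d9])
  calc _ = ‖C * ∑' k, a (k + (m + 1))‖ := by
        rw [χ.deriv_LFunction_eq_deriv_LSeries (by linarith),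
          LSeries_deriv (χ.abscissaOfAbsConv_lt_re (by linarith)),
          χ.LSeries_logMul_eq_term_add_tsum hm_min (by linarith), neg_mul_neg, mul_add, hCa,
          add_sub_cancel_left]
    _ ≤ (m : ℝ) ^ s.re / Real.log m *
          (Real.log (m + 1) / ((m : ℝ) + 1) ^ s.re + logRpowTail s.re (m + 1)) := by
        rw [norm_mul, hnormC]
        gcongr
        exact χ.norm_tsum_term_logMul_tail_le (by linarith) hexp
    _ ≤ _ := rpow_div_log_mul_tail_le hm2 hs

theorem stmt1 (q : ℕ) (hq : 1 < q) [NeZero q] (χ : DirichletCharacter ℂ q) (m : ℕ)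
    (hm_prime : m.Prime) (hm_ndvd : ¬ m ∣ q)
    (hm_min : ∀ p : ℕ, p.Prime → ¬ p ∣ q → m ≤ p)
    (s : ℂ) (hs : 2 ≤ s.re) :
    ‖-((m : ℂ) ^ s / (χ (m : ZMod q) * Real.log m)) *
        deriv (DirichletCharacter.LFunction χ) s - 1‖ ≤
      2 * (1 + 8 * m / s.re) * (1 + 1 / (m : ℝ)) ^ (-s.re) :=
  stmt1_general q χ m hm_prime hm_ndvd hm_min s hs
end

section
/- For real numbers c > r > 0, the identity (1/(2π))·∫_0^{2π} log|c + r·cos θ| dθ = log((c + √(c² - r²))/2) holds. -/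
/-! With `s = √(c² - r²)`, put `u = √((c + s)/2)` and `v = √((c - s)/2)`, so that `u² + v² = c`
and `2uv = r`. Then `c + r cos θ = u² + v² + 2uv cos θ = |u + v e^{iθ}|²`, so the integrand is
`2 log |z|` on the circle of centre `u` and radius `v ≤ u`. By the mean value property of the
harmonic function `log |z|` (which persists when the circle passes through `0`), the average is
`2 log u = log ((c + s)/2)`. -/

open Real

theorem norm_sq_circleMap_ofReal (α β θ : ℝ) :
    ‖circleMap (α : ℂ) β θ‖ ^ 2 = α ^ 2 + β ^ 2 + 2 * α * β * cos θ := by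
  rw [Complex.sq_norm, Complex.normSq_apply]
  simp only [circleMap, Complex.add_re, Complex.add_im, Complex.ofReal_re, Complex.ofReal_im,
    Complex.re_ofReal_mul, Complex.im_ofReal_mul, Complex.exp_ofReal_mul_I_re,
    Complex.exp_ofReal_mul_I_im, zero_add]
  linear_combination β ^ 2 * sin_sq_add_cos_sq θ

theorem circleAverage_log_norm_of_abs_radius_le {c : ℂ} {R : ℝ} (h : |R| ≤ ‖c‖) :
    circleAverage (log ‖·‖) c R = log ‖c‖ := by
  rcases eq_or_ne R 0 with rfl | hR
  · simp
  have hc : ‖c‖ ≠ 0 := (lt_of_lt_of_le (abs_pos.mpr hR) h).ne'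
  have hmean := circleAverage_log_norm_sub_const_eq_log_radius_add_posLog (a := 0) (c := c) hR
  simp only [sub_zero] at hmean
  rw [hmean, posLog_eq_log, ← log_mul hR (mul_ne_zero (inv_ne_zero hR) hc),
    mul_inv_cancel_left₀ hR]
  rw [abs_mul, abs_inv, abs_norm]
  exact (one_le_inv_mul₀ (abs_pos.mpr hR)).mpr h

theorem integral_log_abs_sq_add_sq_add_two_mul_mul_cos {u v : ℝ} (h : |v| ≤ |u|) :
    ∫ θ in (0 : ℝ)..(2 * π), log |u ^ 2 + v ^ 2 + 2 * u * v * cos θ| = 2 * π * log (u ^ 2) := by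
  have hpoint (θ : ℝ) : log |u ^ 2 + v ^ 2 + 2 * u * v * cos θ| = 2 * log ‖circleMap u v θ‖ := by
    rw [← norm_sq_circleMap_ofReal, log_abs, log_pow, Nat.cast_ofNat]
  have hmean : circleAverage (fun z ↦ (2 : ℝ) • log ‖z‖) u v = 2 * log |u| := by
    rw [circleAverage_fun_smul, circleAverage_log_norm_of_abs_radius_le (by simpa using h),
      Complex.norm_real, norm_eq_abs, smul_eq_mul]
  simp only [circleAverage_def, smul_eq_mul] at hmean
  simp_rw [hpoint]
  rw [log_pow, Nat.cast_ofNat, ← log_abs u, ← hmean]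
  field_simp

theorem stmt5 (c r : ℝ) (hr : 0 < r) (hrc : r < c) :
    (1 / (2 * Real.pi)) * ∫ θ in (0 : ℝ)..(2 * Real.pi), Real.log |c + r * Real.cos θ| =
      Real.log ((c + Real.sqrt (c ^ 2 - r ^ 2)) / 2) := by
  set s := √(c ^ 2 - r ^ 2)
  have hs0 : 0 ≤ s := sqrt_nonneg _
  have hs : s ^ 2 = c ^ 2 - r ^ 2 := sq_sqrt (by nlinarith)
  have hsc : s ≤ c := by nlinarith
  set u := √((c + s) / 2)
  set v := √((c - s) / 2)
  have hu : u ^ 2 = (c + s) / 2 := sq_sqrt (by linarith)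
  have hv : v ^ 2 = (c - s) / 2 := sq_sqrt (by linarith)
  have huv : 2 * u * v = r := by
    rw [mul_assoc, ← sqrt_mul (by linarith),
      show (c + s) / 2 * ((c - s) / 2) = (r / 2) ^ 2 by linear_combination -hs / 4,
      sqrt_sq (by positivity)]
    ring
  have hvu : |v| ≤ |u| := by
    rw [abs_of_nonneg (sqrt_nonneg _), abs_of_nonneg (sqrt_nonneg _)]
    exact sqrt_le_sqrt (by linarith)
  have hc (θ : ℝ) : c + r * cos θ = u ^ 2 + v ^ 2 + 2 * u * v * cos θ := by
    rw [hu, hv, huv]; ring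
  simp_rw [hc, integral_log_abs_sq_add_sq_add_two_mul_mul_cos hvu, hu]
  field_simp
end

section
/- Let g: [a,b] → ℂ be continuous with g(a) real and positive, and suppose Re(g(u)) = 0 for at most N values of u in [a,b]. Then any continuous branch of arg g along [a,b] starting at 0 satisfies |arg g(b)| ≤ (N+1)·π. -/
theorem stmt12 (a b : ℝ) (hab : a ≤ b) (g : ℝ → ℂ) (θ : ℝ → ℝ) (N : ℕ)
    (hg : ContinuousOn g (Set.Icc a b))
    (hga_im : (g a).im = 0) (hga_re : 0 < (g a).re)
    (hg0 : ∀ u ∈ Set.Icc a b, g u ≠ 0)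
    (hθ : ContinuousOn θ (Set.Icc a b)) (hθa : θ a = 0)
    (harg : ∀ u ∈ Set.Icc a b, g u = (‖g u‖ : ℂ) * Complex.exp (θ u * Complex.I))
    (hfin : {u ∈ Set.Icc a b | (g u).re = 0}.Finite)
    (hN : {u ∈ Set.Icc a b | (g u).re = 0}.ncard ≤ N) :
    |θ b| ≤ (N + 1) * Real.pi := by
  by_contra hcon
  push_neg at hcon
  have hpi := Real.pi_pos
  set s : ℝ := if 0 ≤ θ b then 1 else -1 with hs
  have hs1 : s = 1 ∨ s = -1 := by unfold s; split <;> simp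
  have key : ∀ k : Fin (N+1), ∃ u ∈ Set.Icc a b,
      θ u = s * (Real.pi/2 + (k : ℕ) * Real.pi) := by
    intro k
    have hk : ((k : ℕ) : ℝ) ≤ N := by exact_mod_cast Nat.lt_succ_iff.mp k.isLt
    have hle : Real.pi/2 + (k : ℕ) * Real.pi < |θ b| := by nlinarith
    have h0 : (0:ℝ) ≤ Real.pi/2 + (k : ℕ) * Real.pi := by positivity
    have htk : s * (Real.pi/2 + (k : ℕ) * Real.pi) ∈ Set.uIcc (θ a) (θ b) := by
      rw [hθa]
      rcases le_or_gt 0 (θ b) with h | h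
      · rw [abs_of_nonneg h] at hle
        simp only [hs, if_pos h]
        rw [Set.uIcc_of_le h, one_mul]
        exact ⟨h0, hle.le⟩
      · rw [abs_of_neg h] at hle
        simp only [hs, if_neg (not_le.mpr h)]
        rw [Set.uIcc_of_ge h.le]
        constructor <;> nlinarith
    have := intermediate_value_uIcc (Set.uIcc_of_le hab ▸ hθ) htk
    obtain ⟨u, hu, hu2⟩ := this
    exact ⟨u, Set.uIcc_of_le hab ▸ hu, hu2⟩
  choose u hu hθu using key
  have hcos : ∀ k : Fin (N+1), Real.cos (θ (u k)) = 0 := by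
    intro k
    rw [hθu k]
    have hc : Real.cos (Real.pi/2 + (k : ℕ) * Real.pi) = 0 := by
      rw [Real.cos_eq_zero_iff]
      exact ⟨(k : ℕ), by push_cast; ring⟩
    rcases hs1 with h | h <;> rw [h]
    · rwa [one_mul]
    · rw [neg_one_mul, Real.cos_neg]; exact hc
  have hmem : ∀ k, u k ∈ {u ∈ Set.Icc a b | (g u).re = 0} := by
    intro k
    refine ⟨hu k, ?_⟩
    rw [harg _ (hu k)]
    simp [Complex.mul_re, Complex.exp_ofReal_mul_I_re, Complex.exp_ofReal_mul_I_im, hcos k]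
  have hinj : Function.Injective u := by
    intro j k hjk
    have heq := hθu j
    rw [hjk, hθu k] at heq
    have hsne : s ≠ 0 := by rcases hs1 with h|h <;> rw [h] <;> norm_num
    have h1 := mul_left_cancel₀ hsne heq
    have h2 : ((j : ℕ) : ℝ) = ((k : ℕ) : ℝ) :=
      (mul_right_cancel₀ (ne_of_gt hpi) (add_left_cancel h1)).symm
    exact Fin.ext (by exact_mod_cast h2)
  have hsub : Set.range u ⊆ {u ∈ Set.Icc a b | (g u).re = 0} :=
    Set.range_subset_iff.mpr hmem
  have hcard : (Set.range u).ncard = N + 1 := by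
    rw [← Nat.card_coe_set_eq, Nat.card_range_of_injective hinj,
      Nat.card_eq_fintype_card, Fintype.card_fin]
  have := Set.ncard_le_ncard hsub hfin
  omega
end
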